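/- For every ε₁ ≥ 0 and ε₂ ≥ 0, every ε₁-LDP randomizer R₁ : 𝒳 → 𝒴 (with 𝒴 countable) and every ε₂-LDP randomizer R₂ : 𝒴 → 𝒵, the composition R₂ ∘ R₁ is an ε-LDP randomizer, where ε = ln((e^{ε₁+ε₂} + 1)/(e^{ε₁} + e^{ε₂})). -/

import Mathlib

open scoped ENNReal

/-- Probability that a sample from the PMF `p` lands in the set `S` (as a real number). -/
noncomputable def pr {Y : Type*} (p : PMF Y) (S : Set Y) : ℝ :=
  (p.toOuterMeasure S).toReal

/-- The local randomizer `R` satisfies `ε`-local differential privacy. -/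
def IsPureLDP {X Y : Type*} (R : X → PMF Y) (ε : ℝ) : Prop :=
  ∀ x x' : X, ∀ S : Set Y, pr (R x) S ≤ Real.exp ε * pr (R x') S

/-!
Write `f y = Pr[R₂(y) ∈ S]`. By `ε₂`-LDP of `R₂`, all values of `f` lie in `[m, e^{ε₂} m]` with
`m = inf f`. Applying `ε₁`-LDP of `R₁` pointwise to the nonnegative functions `f - m` and
`e^{ε₂} m - f` bounds the means `u = E_{R₁ x} f` and `v = E_{R₁ x'} f` by
`u - m ≤ e^{ε₁} (v - m)` and `e^{ε₂} m - v ≤ e^{ε₁} (e^{ε₂} m - u)`; the combination with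
weights `e^{ε₂}` and `1` eliminates `m` and gives `(e^{ε₁} + e^{ε₂}) u ≤ (e^{ε₁+ε₂} + 1) v`.
-/

noncomputable def expectation {Y : Type*} (p : PMF Y) (f : Y → ℝ) : ℝ :=
  ∑' y, (p y).toReal * f y

section Expectation

variable {Y : Type*} (p q : PMF Y) {f : Y → ℝ} {C : ℝ}

theorem PMF.summable_toReal : Summable fun y => (p y).toReal :=
  ENNReal.summable_toReal p.tsum_coe_ne_top

theorem PMF.tsum_toReal : ∑' y, (p y).toReal = 1 := by
  rw [← ENNReal.tsum_toReal_eq p.apply_ne_top, p.tsum_coe, ENNReal.toReal_one]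

variable {p q}

theorem summable_toReal_mul (hf₀ : ∀ y, 0 ≤ f y) (hf₁ : ∀ y, f y ≤ C) :
    Summable fun y => (p y).toReal * f y :=
  Summable.of_nonneg_of_le (fun y => mul_nonneg ENNReal.toReal_nonneg (hf₀ y))
    (fun y => mul_le_mul_of_nonneg_left (hf₁ y) ENNReal.toReal_nonneg)
    (p.summable_toReal.mul_right C)

theorem expectation_sub_const (hf₀ : ∀ y, 0 ≤ f y) (hf₁ : ∀ y, f y ≤ C) (c : ℝ) :
    expectation p (fun y => f y - c) = expectation p f - c := by
  simp only [expectation, mul_sub]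
  rw [(summable_toReal_mul hf₀ hf₁).tsum_sub (p.summable_toReal.mul_right c), tsum_mul_right,
    p.tsum_toReal, one_mul]

theorem expectation_const_sub (hf₀ : ∀ y, 0 ≤ f y) (hf₁ : ∀ y, f y ≤ C) (c : ℝ) :
    expectation p (fun y => c - f y) = c - expectation p f := by
  simp only [expectation, mul_sub]
  rw [(p.summable_toReal.mul_right c).tsum_sub (summable_toReal_mul hf₀ hf₁), tsum_mul_right,
    p.tsum_toReal, one_mul]

theorem expectation_le_mul {a : ℝ} (hpq : ∀ y, (p y).toReal ≤ a * (q y).toReal)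
    (hf₀ : ∀ y, 0 ≤ f y) (hf₁ : ∀ y, f y ≤ C) :
    expectation p f ≤ a * expectation q f := by
  rw [expectation, expectation, ← tsum_mul_left]
  refine (summable_toReal_mul hf₀ hf₁).tsum_le_tsum (fun y => ?_)
    ((summable_toReal_mul hf₀ hf₁).mul_left a)
  rw [← mul_assoc]
  exact mul_le_mul_of_nonneg_right (hpq y) (hf₀ y)

end Expectation

section Probability

variable {Y Z : Type*}

theorem pr_nonneg (p : PMF Y) (S : Set Y) : 0 ≤ pr p S :=
  ENNReal.toReal_nonneg

theorem PMF.toOuterMeasure_apply_le_one (p : PMF Y) (S : Set Y) : p.toOuterMeasure S ≤ 1 :=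
  (MeasureTheory.measure_mono (Set.subset_univ S)).trans_eq
    ((p.toOuterMeasure_apply_eq_one_iff _).2 (Set.subset_univ _))

theorem pr_le_one (p : PMF Y) (S : Set Y) : pr p S ≤ 1 :=
  ENNReal.toReal_le_of_le_ofReal zero_le_one
    (by simpa using p.toOuterMeasure_apply_le_one S)

theorem pr_singleton (p : PMF Y) (y : Y) : pr p {y} = (p y).toReal := by
  rw [pr, PMF.toOuterMeasure_apply_singleton]

theorem pr_bind (p : PMF Y) (R : Y → PMF Z) (S : Set Z) :
    pr (p.bind R) S = expectation p fun y => pr (R y) S := by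
  rw [pr, PMF.toOuterMeasure_bind_apply, ENNReal.tsum_toReal_eq fun y =>
    ENNReal.mul_ne_top (p.apply_ne_top y) (ne_top_of_le_ne_top ENNReal.one_ne_top
      ((R y).toOuterMeasure_apply_le_one S))]
  simp only [ENNReal.toReal_mul, expectation, pr]

theorem IsPureLDP.toReal_apply_le {X : Type*} {R : X → PMF Y} {ε : ℝ} (h : IsPureLDP R ε)
    (x x' : X) (y : Y) : (R x y).toReal ≤ Real.exp ε * (R x' y).toReal := by
  simpa only [pr_singleton] using h x x' {y}

end Probability

theorem exists_le_and_le_mul {Y : Type*} {f : Y → ℝ} {b : ℝ} (hb : 0 < b) (hf₀ : ∀ y, 0 ≤ f y)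
    (hf : ∀ y y', f y ≤ b * f y') : ∃ m, ∀ y, m ≤ f y ∧ f y ≤ b * m := by
  refine ⟨⨅ y, f y, fun y => ⟨ciInf_le ⟨0, Set.forall_mem_range.2 hf₀⟩ y, ?_⟩⟩
  have : Nonempty Y := ⟨y⟩
  rw [← div_le_iff₀' hb]
  exact le_ciInf fun y' => (div_le_iff₀' hb).2 (hf y y')

theorem le_div_mul_of_le_mul_sub {a b m u v : ℝ} (ha : 0 < a) (hb : 0 < b)
    (hu : u - m ≤ a * (v - m)) (hv : b * m - v ≤ a * (b * m - u)) :
    u ≤ (a * b + 1) / (a + b) * v := by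
  rw [div_mul_eq_mul_div, le_div_iff₀ (by positivity)]
  linarith [mul_le_mul_of_nonneg_left hu hb.le]

theorem composition_of_pure_ldp_randomizers_general {X Y Z : Type*}
    (ε₁ ε₂ : ℝ)
    (R₁ : X → PMF Y) (R₂ : Y → PMF Z)
    (h₁ : IsPureLDP R₁ ε₁) (h₂ : IsPureLDP R₂ ε₂) :
    IsPureLDP (fun x => (R₁ x).bind R₂)
      (Real.log ((Real.exp (ε₁ + ε₂) + 1) / (Real.exp ε₁ + Real.exp ε₂))) := by
  intro x x' S
  have hf₀ (y : Y) : 0 ≤ pr (R₂ y) S := pr_nonneg _ _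
  have hf₁ (y : Y) : pr (R₂ y) S ≤ 1 := pr_le_one _ _
  obtain ⟨m, hm⟩ := exists_le_and_le_mul (Real.exp_pos ε₂) hf₀ fun y y' => h₂ y y' S
  have hu := expectation_le_mul (h₁.toReal_apply_le x x') (C := 1 - m)
    (fun y => sub_nonneg.2 (hm y).1) (fun y => sub_le_sub_right (hf₁ y) m)
  have hv := expectation_le_mul (h₁.toReal_apply_le x' x) (C := Real.exp ε₂ * m)
    (fun y => sub_nonneg.2 (hm y).2) (fun y => sub_le_self _ (hf₀ y))
  rw [expectation_sub_const hf₀ hf₁, expectation_sub_const hf₀ hf₁] at hu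
  rw [expectation_const_sub hf₀ hf₁, expectation_const_sub hf₀ hf₁] at hv
  rw [Real.exp_log (by positivity), Real.exp_add, pr_bind, pr_bind]
  exact le_div_mul_of_le_mul_sub (Real.exp_pos ε₁) (Real.exp_pos ε₂) hu hv

/-- Composition of pure LDP randomizers: for every `ε₁-LDP` randomizer `R₁ : 𝒳 → 𝒴`
(with `𝒴` countable) and every `ε₂`-LDP randomizer `R₂ : 𝒴 → 𝒵`, the composition
`R₂ ∘ R₁` (i.e. `x ↦ (R₁ x).bind R₂`) is `ε`-LDP for
`ε = ln((e^{ε₁+ε₂} + 1)/(e^{ε₁} + e^{ε₂}))`. -/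
theorem composition_of_pure_ldp_randomizers {X Y Z : Type*} [Countable Y]
    (ε₁ ε₂ : ℝ) (hε₁ : 0 ≤ ε₁) (hε₂ : 0 ≤ ε₂)
    (R₁ : X → PMF Y) (R₂ : Y → PMF Z)
    (h₁ : IsPureLDP R₁ ε₁) (h₂ : IsPureLDP R₂ ε₂) :
    IsPureLDP (fun x => (R₁ x).bind R₂)
      (Real.log ((Real.exp (ε₁ + ε₂) + 1) / (Real.exp ε₁ + Real.exp ε₂))) :=
  composition_of_pure_ldp_randomizers_general ε₁ ε₂ R₁ R₂ h₁ h₂
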